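/- If f ∈ ℝ⟨X⟩ is cyclically equivalent (over ℂ⟨X⟩) to an element of M_ℂ, then f is cyclically equivalent (over ℝ⟨X⟩) to an element of M_ℝ. -/

import Mathlib

abbrev NCPoly (k : Type) [CommSemiring k] (n : ℕ) := MonoidAlgebra k (FreeMonoid (Fin n))

noncomputable def ncWord (k : Type) [CommSemiring k] {n : ℕ} (w : FreeMonoid (Fin n)) : NCPoly k n :=
  MonoidAlgebra.of k (FreeMonoid (Fin n)) w

noncomputable def ncX (k : Type) [CommSemiring k] {n : ℕ} (i : Fin n) : NCPoly k n :=
  ncWord k (FreeMonoid.of i)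

/-- The involution on `k⟨X⟩` fixing the variables and conjugating coefficients. -/
noncomputable def ncStar {k : Type} [CommSemiring k] [StarRing k] {n : ℕ} (f : NCPoly k n) : NCPoly k n :=
  MonoidAlgebra.ofCoeff (Finsupp.mapDomain FreeMonoid.reverse (Finsupp.mapRange star (star_zero k) f.coeff))

/-- `f` and `g` are cyclically equivalent: `f - g` is a sum of commutators. -/
def IsCyclicEquiv {k : Type} [CommRing k] {n : ℕ} (f g : NCPoly k n) : Prop :=
  f - g ∈ AddSubmonoid.closure {x : NCPoly k n | ∃ p q, x = p * q - q * p}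

/-- The quadratic module generated by the `1 - X_i^2`: all finite sums of
elements `g* g` and `g* (1 - X_i^2) g`. -/
noncomputable def QuadMod (k : Type) [CommRing k] [StarRing k] (n : ℕ) : AddSubmonoid (NCPoly k n) :=
  AddSubmonoid.closure
    ({x | ∃ g : NCPoly k n, x = ncStar g * g} ∪
     {x | ∃ (g : NCPoly k n) (i : Fin n), x = ncStar g * (1 - (ncX k i) ^ 2) * g})

/-- Evaluation of a noncommutative polynomial at a tuple of matrices. -/
noncomputable def ncEval {k : Type} [CommRing k] {n s : ℕ}
    (A : Fin n → Matrix (Fin s) (Fin s) k) :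
    NCPoly k n →ₐ[k] Matrix (Fin s) (Fin s) k :=
  MonoidAlgebra.lift (R := k) (M := FreeMonoid (Fin n)) (A := Matrix (Fin s) (Fin s) k) (FreeMonoid.lift A)

/-- A self-adjoint contraction matrix: `A* = A` and `1 - A²` positive semidefinite. -/
def IsSAContraction {k : Type} [CommRing k] [StarRing k] [PartialOrder k] [StarOrderedRing k]
    {s : ℕ} (A : Matrix (Fin s) (Fin s) k) : Prop :=
  A.IsHermitian ∧ (1 - A * A).PosSemidef

/-- The natural inclusion `ℝ⟨X⟩ → ℂ⟨X⟩`. -/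
noncomputable def toC {n : ℕ} : NCPoly ℝ n →ₐ[ℝ] NCPoly ℂ n :=
  MonoidAlgebra.lift (R := ℝ) (M := FreeMonoid (Fin n)) (A := NCPoly ℂ n) (MonoidAlgebra.of ℂ (FreeMonoid (Fin n)))

/-! Taking real parts of coefficients is an additive map `re : ℂ⟨X⟩ → ℝ⟨X⟩` that is the identity
on `ℝ⟨X⟩`. Writing `g = a + i b` with `a, b` real, `re (g* m g) = a* m a + b* m b` for real `m`, and
`re [p, q] = [re p, re q] + [im q, im p]`. So `re` maps `M_ℂ` into `M_ℝ` and sums of commutators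
to sums of commutators, and `re h` is the required element of `M_ℝ`. -/

namespace MonoidAlgebra

variable {M : Type*}

noncomputable def re : MonoidAlgebra ℂ M →+ MonoidAlgebra ℝ M where
  toFun := map Complex.reAddGroupHom
  map_zero' := MonoidAlgebra.map_zero _
  map_add' := MonoidAlgebra.map_add _

noncomputable def im : MonoidAlgebra ℂ M →+ MonoidAlgebra ℝ M where
  toFun := map Complex.imAddGroupHom
  map_zero' := MonoidAlgebra.map_zero _
  map_add' := MonoidAlgebra.map_add _

@[simp] lemma coeff_re (x : MonoidAlgebra ℂ M) (m : M) : (re x).coeff m = (x.coeff m).re := rfl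

@[simp] lemma coeff_im (x : MonoidAlgebra ℂ M) (m : M) : (im x).coeff m = (x.coeff m).im := rfl

variable [Monoid M]

noncomputable def ofReal : MonoidAlgebra ℝ M →ₐ[ℝ] MonoidAlgebra ℂ M :=
  mapAlgHom M (Algebra.ofId ℝ ℂ)

@[simp] lemma coeff_ofReal (a : MonoidAlgebra ℝ M) (m : M) : (ofReal a).coeff m = a.coeff m := by
  simp [ofReal]

@[simp] lemma re_ofReal (a : MonoidAlgebra ℝ M) : re (ofReal a) = a := by ext; simp

@[simp] lemma im_ofReal (a : MonoidAlgebra ℝ M) : im (ofReal a) = 0 := by ext; simp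

@[simp] lemma re_I_smul_ofReal (a : MonoidAlgebra ℝ M) : re (Complex.I • ofReal a) = 0 := by
  ext; simp

@[simp] lemma im_I_smul_ofReal (a : MonoidAlgebra ℝ M) : im (Complex.I • ofReal a) = a := by
  ext; simp

lemma ofReal_re_add_I_smul_ofReal_im (x : MonoidAlgebra ℂ M) :
    ofReal (re x) + Complex.I • ofReal (im x) = x := by
  ext m; simpa [mul_comm] using Complex.re_add_im (x.coeff m)

lemma mul_eq_ofReal_add_I_smul_ofReal (x y : MonoidAlgebra ℂ M) :
    x * y = ofReal (re x * re y - im x * im y) + Complex.I • ofReal (re x * im y + im x * re y) := by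
  conv_lhs => rw [← ofReal_re_add_I_smul_ofReal_im x, ← ofReal_re_add_I_smul_ofReal_im y]
  simp only [map_sub, map_add, map_mul, add_mul, mul_add, smul_mul_assoc, mul_smul_comm,
    smul_smul, Complex.I_mul_I, neg_smul, one_smul, smul_add]
  module

lemma re_mul (x y : MonoidAlgebra ℂ M) : re (x * y) = re x * re y - im x * im y := by
  rw [mul_eq_ofReal_add_I_smul_ofReal x y, map_add, re_ofReal, re_I_smul_ofReal, add_zero]

lemma im_mul (x y : MonoidAlgebra ℂ M) : im (x * y) = re x * im y + im x * re y := by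
  rw [mul_eq_ofReal_add_I_smul_ofReal x y, map_add, im_ofReal, im_I_smul_ofReal, zero_add]

lemma re_commutator (p q : MonoidAlgebra ℂ M) :
    re (p * q - q * p) = (re p * re q - re q * re p) + (im q * im p - im p * im q) := by
  rw [map_sub, re_mul, re_mul]; abel

end MonoidAlgebra

lemma toC_eq_ofReal {n : ℕ} : toC (n := n) = MonoidAlgebra.ofReal := by
  ext; simp [toC, MonoidAlgebra.ofReal]

section

open MonoidAlgebra

variable {n : ℕ}

lemma coeff_ncStar {k : Type} [CommSemiring k] [StarRing k] (x : NCPoly k n)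
    (w : FreeMonoid (Fin n)) : (ncStar x).coeff w = star (x.coeff w.reverse) := by
  have hrev : Function.Injective (FreeMonoid.reverse (α := Fin n)) :=
    Function.LeftInverse.injective fun _ => FreeMonoid.reverse_reverse
  obtain ⟨v, rfl⟩ : ∃ v, w = v.reverse := ⟨w.reverse, FreeMonoid.reverse_reverse.symm⟩
  rw [ncStar, coeff_ofCoeff, Finsupp.mapDomain_apply hrev, Finsupp.mapRange_apply,
    FreeMonoid.reverse_reverse]

lemma re_ncStar (x : NCPoly ℂ n) : re (ncStar x) = ncStar (re x) := by
  ext w; simp [coeff_ncStar]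

lemma im_ncStar (x : NCPoly ℂ n) : im (ncStar x) = -ncStar (im x) := by
  ext w; simp [coeff_ncStar]

lemma ofReal_ncX (i : Fin n) : ofReal (ncX ℝ i) = ncX ℂ i := by
  simp [ncX, ncWord, ofReal]

lemma re_ncStar_mul_self (g : NCPoly ℂ n) :
    re (ncStar g * g) = ncStar (re g) * re g + ncStar (im g) * im g := by
  rw [re_mul, re_ncStar, im_ncStar, neg_mul, sub_neg_eq_add]

lemma re_ncStar_mul_ofReal_mul_self (g : NCPoly ℂ n) (m : NCPoly ℝ n) :
    re (ncStar g * ofReal m * g) = ncStar (re g) * m * re g + ncStar (im g) * m * im g := by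
  simp only [re_mul, im_mul, re_ncStar, im_ncStar, re_ofReal, im_ofReal]
  noncomm_ring

lemma re_mem_quadMod {x : NCPoly ℂ n} (hx : x ∈ QuadMod ℂ n) : re x ∈ QuadMod ℝ n := by
  refine (AddSubmonoid.closure_le (S := (QuadMod ℝ n).comap re)).2 ?_ hx
  have mem_of_sq (g : NCPoly ℝ n) : ncStar g * g ∈ QuadMod ℝ n :=
    AddSubmonoid.subset_closure (Or.inl ⟨g, rfl⟩)
  have mem_of_gen (g : NCPoly ℝ n) (i : Fin n) : ncStar g * (1 - ncX ℝ i ^ 2) * g ∈ QuadMod ℝ n :=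
    AddSubmonoid.subset_closure (Or.inr ⟨g, i, rfl⟩)
  rintro _ (⟨g, rfl⟩ | ⟨g, i, rfl⟩) <;> rw [SetLike.mem_coe, AddSubmonoid.mem_comap]
  · rw [re_ncStar_mul_self]
    exact add_mem (mem_of_sq _) (mem_of_sq _)
  · have hgen : (1 : NCPoly ℂ n) - ncX ℂ i ^ 2 = ofReal (1 - ncX ℝ i ^ 2) := by
      rw [map_sub, map_one, map_pow, ofReal_ncX]
    rw [hgen, re_ncStar_mul_ofReal_mul_self]
    exact add_mem (mem_of_gen _ i) (mem_of_gen _ i)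

lemma IsCyclicEquiv.map_re {f g : NCPoly ℂ n} (h : IsCyclicEquiv f g) :
    IsCyclicEquiv (re f) (re g) := by
  unfold IsCyclicEquiv at h ⊢
  rw [← map_sub]
  refine AddSubmonoid.mem_comap.1
    ((AddSubmonoid.closure_le (S := AddSubmonoid.comap re _)).2 ?_ h)
  rintro _ ⟨p, q, rfl⟩
  rw [SetLike.mem_coe, AddSubmonoid.mem_comap, re_commutator]
  exact add_mem (AddSubmonoid.subset_closure ⟨_, _, rfl⟩)
    (AddSubmonoid.subset_closure ⟨_, _, rfl⟩)

end

theorem stmt12 {n : ℕ} (f : NCPoly ℝ n)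
    (h : ∃ h ∈ QuadMod ℂ n, IsCyclicEquiv (toC f) h) :
    ∃ g ∈ QuadMod ℝ n, IsCyclicEquiv f g := by
  obtain ⟨g, hg, hfg⟩ := h
  refine ⟨MonoidAlgebra.re g, re_mem_quadMod hg, ?_⟩
  simpa [toC_eq_ofReal] using hfg.map_re
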